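/- Let m(t) be the largest size of a partition in DS(t). Then m(1) = 0, m(2) = 1, and m(t) = 2t − 1 for 3 ≤ t ≤ 5. -/

import Mathlib

/-- An integer partition, given by its (weakly decreasing, eventually zero)
sequence of parts, indexed from `0`. -/
structure IntPartition where
  parts : ℕ → ℕ
  antitone : ∀ i j, i ≤ j → parts j ≤ parts i
  finite : ∃ N, ∀ i, N ≤ i → parts i = 0

namespace IntPartition

/-- The size of a partition: the sum of its parts. -/
noncomputable def size (lam : IntPartition) : ℕ := ∑ᶠ i, lam.parts i

/-- The parts of the conjugate partition: `conjParts lam j` is the number of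
rows `i` with `lam.parts i > j` (rows and columns are `0`-indexed). -/
noncomputable def conjParts (lam : IntPartition) (j : ℕ) : ℕ :=
  Nat.card {i : ℕ | j < lam.parts i}

/-- A partition is self-conjugate if it equals its conjugate. -/
def IsSelfConjugate (lam : IntPartition) : Prop :=
  ∀ j, lam.conjParts j = lam.parts j

/-- `(i, j)` (both `0`-indexed) is a cell of the Young diagram of `lam`. -/
def IsCell (lam : IntPartition) (i j : ℕ) : Prop := j < lam.parts i

/-- The hook length of the cell `(i, j)` (both `0`-indexed): the number of
cells directly to the right, plus the number directly below, plus one. -/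
noncomputable def hook (lam : IntPartition) (i j : ℕ) : ℕ :=
  (lam.parts i - j) + (lam.conjParts j - i) - 1

/-- A partition is a `t`-core if no hook length is divisible by `t`. -/
def IsCore (lam : IntPartition) (t : ℕ) : Prop :=
  ∀ i j, lam.IsCell i j → ¬ (t ∣ lam.hook i j)

/-- The size of the Durfee square: the largest `k` such that the partition has
at least `k` parts of size at least `k`. -/
noncomputable def durfee (lam : IntPartition) : ℕ :=
  Nat.card {i : ℕ | i < lam.parts i}

/-- A partition has distinct parts if its (nonzero) parts are pairwise different. -/
def DistinctParts (lam : IntPartition) : Prop :=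
  ∀ i j, lam.parts i ≠ 0 → lam.parts j ≠ 0 → i ≠ j → lam.parts i ≠ lam.parts j

/-- The set of main diagonal hook lengths of `lam`. -/
noncomputable def MD (lam : IntPartition) : Set ℕ :=
  {h | ∃ i < lam.durfee, lam.hook i i = h}

/-- `lam ∈ DS(t)`: `lam` is a self-conjugate `(t, t+1)`-core partition whose
first `durfee lam` parts are pairwise distinct. -/
def InDS (lam : IntPartition) (t : ℕ) : Prop :=
  lam.IsSelfConjugate ∧ lam.IsCore t ∧ lam.IsCore (t + 1) ∧
    ∀ i j, i < lam.durfee → j < lam.durfee → i ≠ j → lam.parts i ≠ lam.parts j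

end IntPartition

open Finset

/-!
Encode `λ ∈ DS(t)` with `a = λ₀` by the set `F` of hook lengths of its first column, so that
`|λ| + (0 + 1 + ⋯ + (a - 1)) = ∑ F`. On the abacus, `F` of a `t`-core is closed under
`b ↦ b - t` for `b ≥ t`; self-conjugacy makes `2a - 1 = max F` not a sum of two elements of
`F`; and distinct first `s(λ)` parts forbid two consecutive elements of `F` that are `≥ a`.
Applied to `b = 2a - 1`, these force `a ≤ t`, and for `t ≤ 5` they leave only a few possible `F`,
whose sums give the bound. It is attained by the hook partitions `(n, 1ⁿ⁻¹)`.
-/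

theorem lt_natCard_iff_mem_of_isLowerSet {s : Set ℕ} (hs : IsLowerSet s) (hfin : s.Finite)
    {i : ℕ} : i < Nat.card s ↔ i ∈ s := by
  obtain rfl | ⟨k, rfl⟩ := hs.eq_univ_or_Iio
  · exact absurd hfin Set.infinite_univ
  · simp

namespace IntPartition

variable (lam : IntPartition)

theorem finite_setOf_parts_pos : {i | 0 < lam.parts i}.Finite := by
  obtain ⟨N, hN⟩ := lam.finite
  refine (Set.finite_Iio N).subset fun i hi => ?_
  by_contra hiN
  exact (hN i (not_lt.1 hiN)).not_gt hi

theorem lt_conjParts_iff {i j : ℕ} : i < lam.conjParts j ↔ j < lam.parts i :=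
  lt_natCard_iff_mem_of_isLowerSet (fun _ _ hle (h : j < _) => h.trans_le (lam.antitone _ _ hle))
    (lam.finite_setOf_parts_pos.subset fun _ h => (Nat.zero_le j).trans_lt h)

theorem lt_durfee_iff {i : ℕ} : i < lam.durfee ↔ i < lam.parts i :=
  lt_natCard_iff_mem_of_isLowerSet
    (fun a _ hle (h : a < _) => hle.trans_lt (h.trans_le (lam.antitone _ _ hle)))
    (lam.finite_setOf_parts_pos.subset fun _ h => (Nat.zero_le _).trans_lt h)

theorem conjParts_antitone : Antitone lam.conjParts := fun _ _ hjj' =>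
  le_of_forall_lt fun _ hi => lam.lt_conjParts_iff.2 ((lam.lt_conjParts_iff.1 hi).trans_le' hjj')

theorem parts_add_conjParts_ne (k j : ℕ) : lam.parts k + lam.conjParts j ≠ k + j + 1 := by
  have := @lam.lt_conjParts_iff k j
  omega

theorem hook_add {i j : ℕ} (h : lam.IsCell i j) :
    lam.hook i j + i + j + 1 = lam.parts i + lam.conjParts j := by
  have := lam.lt_conjParts_iff.2 h
  unfold IsCell at h
  unfold hook
  omega

theorem isSelfConjugate_of_forall_lt_iff (h : ∀ i j, i < lam.parts j ↔ j < lam.parts i) :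
    lam.IsSelfConjugate := fun j =>
  eq_of_forall_lt_iff fun i => lam.lt_conjParts_iff.trans (h i j).symm

theorem hook_pos {i j : ℕ} (h : lam.IsCell i j) : 0 < lam.hook i j := by
  have := lam.hook_add h
  have := lam.lt_conjParts_iff.2 h
  unfold IsCell at h
  omega

theorem hook_zero_add {i : ℕ} (hi : i < lam.conjParts 0) :
    lam.hook i 0 + i + 1 = lam.parts i + lam.conjParts 0 := by
  simpa using lam.hook_add (lam.lt_conjParts_iff.1 hi)

theorem hook_zero_strictAntiOn : StrictAntiOn (lam.hook · 0) (Set.Iio (lam.conjParts 0)) := by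
  intro i hi j hj hij
  have := lam.hook_zero_add hi
  have := lam.hook_zero_add hj
  have := lam.antitone i j hij.le
  simp only
  omega

noncomputable def firstColumnHooks : Finset ℕ :=
  (range (lam.conjParts 0)).image (lam.hook · 0)

theorem mem_firstColumnHooks {b : ℕ} :
    b ∈ lam.firstColumnHooks ↔ ∃ i < lam.conjParts 0, lam.hook i 0 = b := by
  simp [firstColumnHooks]

theorem card_filter_notMem_firstColumnHooks_le {i : ℕ} (hi : i < lam.conjParts 0) :
    #{m ∈ range (lam.hook i 0) | m ∉ lam.firstColumnHooks} ≤ lam.parts i := by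
  classical
  have hbelow : (Ioo i (lam.conjParts 0)).image (lam.hook · 0) ⊆
      {m ∈ range (lam.hook i 0) | m ∈ lam.firstColumnHooks} := by
    intro m hm
    obtain ⟨k, hk, rfl⟩ := mem_image.1 hm
    rw [mem_Ioo] at hk
    simp only [mem_filter, mem_range, lam.mem_firstColumnHooks]
    exact ⟨lam.hook_zero_strictAntiOn hi hk.2 hk.1, k, hk.2, rfl⟩
  have hcard := card_le_card hbelow
  rw [card_image_of_injOn (lam.hook_zero_strictAntiOn.injOn.mono fun k hk => (mem_Ioo.1 hk).2),
    Nat.card_Ioo] at hcard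
  have := card_filter_add_card_filter_not (s := range (lam.hook i 0))
    (· ∈ lam.firstColumnHooks)
  have := lam.hook_zero_add hi
  rw [card_range] at *
  omega

theorem exists_hook_add_eq_hook_zero {i m : ℕ} (hi : i < lam.conjParts 0)
    (hm : m < lam.hook i 0) (hmF : m ∉ lam.firstColumnHooks) :
    ∃ j, lam.IsCell i j ∧ lam.hook i j + m = lam.hook i 0 := by
  classical
  -- the gaps of the abacus of first-column hooks below `hook i 0` are the `c j` with `j < λᵢ`
  set c : ℕ → ℕ := fun j => lam.conjParts 0 + j - lam.conjParts j
  have hconj_le : ∀ j, lam.conjParts j ≤ lam.conjParts 0 :=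
    fun j => lam.conjParts_antitone (Nat.zero_le j)
  have hc_strictMono : StrictMono c := fun j j' hjj' => by
    have := lam.conjParts_antitone hjj'.le
    have := hconj_le j
    simp only [c]
    omega
  have hc_hook : ∀ j, lam.IsCell i j → lam.hook i j + c j = lam.hook i 0 := fun j hj => by
    have := lam.hook_add hj
    have := lam.hook_zero_add hi
    have := lam.lt_conjParts_iff.2 hj
    have := hconj_le j
    simp only [c]
    omega
  have hc_notMem : ∀ j, c j ∉ lam.firstColumnHooks := fun j hj => by
    obtain ⟨k, hk, hkj⟩ := lam.mem_firstColumnHooks.1 hj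
    have := lam.hook_zero_add hk
    have := lam.parts_add_conjParts_ne k j
    have := hconj_le j
    simp only [c] at hkj
    omega
  have hsub : (range (lam.parts i)).image c ⊆
      {m ∈ range (lam.hook i 0) | m ∉ lam.firstColumnHooks} := by
    intro m hm
    obtain ⟨j, hj, rfl⟩ := mem_image.1 hm
    have := hc_hook j (mem_range.1 hj)
    have := lam.hook_pos (mem_range.1 hj)
    simp only [mem_filter, mem_range]
    exact ⟨by omega, hc_notMem j⟩
  have heq := eq_of_subset_of_card_le hsub <| by
    rw [card_image_of_injective _ hc_strictMono.injective, card_range]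
    exact lam.card_filter_notMem_firstColumnHooks_le hi
  have hmem : m ∈ (range (lam.parts i)).image c := by
    rw [heq, mem_filter, mem_range]
    exact ⟨hm, hmF⟩
  obtain ⟨j, hj, rfl⟩ := mem_image.1 hmem
  exact ⟨j, mem_range.1 hj, hc_hook j (mem_range.1 hj)⟩

theorem size_eq_sum_range : lam.size = ∑ i ∈ range (lam.conjParts 0), lam.parts i := by
  refine finsum_eq_sum_of_support_subset _ fun i hi => ?_
  rw [coe_range, Set.mem_Iio, lam.lt_conjParts_iff]
  exact Nat.pos_of_ne_zero hi

theorem size_le_conjParts_zero_mul_parts_zero :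
    lam.size ≤ lam.conjParts 0 * lam.parts 0 := by
  rw [size_eq_sum_range]
  simpa using sum_le_card_nsmul (range _) _ _ fun i _ => lam.antitone 0 i (Nat.zero_le i)

theorem size_add_sum_range_eq_sum_firstColumnHooks :
    lam.size + ∑ i ∈ range (lam.conjParts 0), i = ∑ b ∈ lam.firstColumnHooks, b := by
  set n := lam.conjParts 0
  have hhook : ∀ i ∈ range n, lam.hook i 0 = lam.parts i + (n - 1 - i) := fun i hi => by
    have := lam.hook_zero_add (mem_range.1 hi)
    have := mem_range.1 hi
    omega
  rw [firstColumnHooks, sum_image fun i hi j hj =>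
      lam.hook_zero_strictAntiOn.injOn (by simpa using hi) (by simpa using hj),
    sum_congr rfl hhook, sum_add_distrib, size_eq_sum_range, sum_range_reflect (fun i => i) n]

end IntPartition

structure IsDSHookSet (t a : ℕ) (F : Finset ℕ) : Prop where
  zero_notMem : 0 ∉ F
  top_mem : 2 * a - 1 ∈ F
  le_top : ∀ b ∈ F, b ≤ 2 * a - 1
  sub_mem : ∀ b ∈ F, t ≤ b → b - t ∈ F
  sub_succ_mem : ∀ b ∈ F, t + 1 ≤ b → b - (t + 1) ∈ F
  add_ne_top : ∀ b ∈ F, ∀ c ∈ F, b + c ≠ 2 * a - 1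
  succ_notMem : ∀ b ∈ F, a ≤ b → b + 1 ∉ F

namespace IsDSHookSet

variable {t a : ℕ} {F : Finset ℕ}

theorem notMem_self (hF : IsDSHookSet t a F) : t ∉ F := fun h =>
  hF.zero_notMem (by simpa using hF.sub_mem t h le_rfl)

theorem succ_notMem_self (hF : IsDSHookSet t a F) : t + 1 ∉ F := fun h =>
  hF.zero_notMem (by simpa using hF.sub_succ_mem _ h le_rfl)

theorem le (hF : IsDSHookSet t a F) : a ≤ t := by
  by_contra! hta
  have h₁ := hF.sub_mem _ hF.top_mem (by omega)
  obtain rfl | hta := eq_or_lt_of_le (Nat.succ_le_of_lt hta)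
  · exact hF.succ_notMem_self (by convert h₁ using 1; omega)
  have h₂ := hF.sub_succ_mem _ hF.top_mem (by omega)
  exact hF.succ_notMem _ h₂ (by omega) (by convert h₁ using 1; omega)

theorem pos (hF : IsDSHookSet t a F) : 0 < a := by
  by_contra! ha
  exact hF.zero_notMem (by simpa [Nat.le_zero.1 ha] using hF.top_mem)

theorem one_lt (hF : IsDSHookSet t a F) : 1 < t := by
  by_contra! ht
  obtain rfl : a = t := by have := hF.pos; have := hF.le; omega
  exact hF.notMem_self (by convert hF.top_mem using 1; omega)

theorem sum_le_two (hF : IsDSHookSet 2 a F) (ha : 1 < a * a) :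
    ∑ b ∈ F, b ≤ ∑ i ∈ range a, i + 1 := by
  obtain rfl : a = 2 := by have := hF.le; nlinarith
  exact absurd hF.top_mem hF.succ_notMem_self

theorem sum_le_three (hF : IsDSHookSet 3 a F) (ha : 5 < a * a) :
    ∑ b ∈ F, b ≤ ∑ i ∈ range a, i + 5 := by
  obtain rfl : a = 3 := by have := hF.le; nlinarith
  have h₀ := hF.zero_notMem
  have h₃ := hF.notMem_self
  have h₄ := hF.succ_notMem_self
  have hsub : F ⊆ {1, 2, 5} := fun b hb => by
    have := hF.le_top b hb
    interval_cases b <;> first | decide | contradiction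
  exact (sum_le_sum_of_subset hsub).trans (by decide)

theorem sum_le_four (hF : IsDSHookSet 4 a F) (ha : 7 < a * a) :
    ∑ b ∈ F, b ≤ ∑ i ∈ range a, i + 7 := by
  have := hF.le
  have : 3 ≤ a := by nlinarith
  interval_cases a
  · exact absurd hF.top_mem hF.succ_notMem_self
  have h₀ := hF.zero_notMem
  have h₄ := hF.notMem_self
  have h₅ := hF.succ_notMem_self
  have h₆ : 6 ∉ F := fun h => hF.add_ne_top _ (hF.sub_succ_mem 6 h (by norm_num)) 6 h rfl
  have hsub : F ⊆ {1, 2, 3, 7} := fun b hb => by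
    have := hF.le_top b hb
    interval_cases b <;> first | decide | contradiction
  exact (sum_le_sum_of_subset hsub).trans (by decide)

theorem sum_le_five (hF : IsDSHookSet 5 a F) (ha : 9 < a * a) :
    ∑ b ∈ F, b ≤ ∑ i ∈ range a, i + 9 := by
  have := hF.le
  have h₀ := hF.zero_notMem
  have h₅ := hF.notMem_self
  have h₆ := hF.succ_notMem_self
  have : 4 ≤ a := by nlinarith
  interval_cases a
  · obtain h₃ | h₄ : 3 ∉ F ∨ 4 ∉ F := not_and_or.1 fun h => hF.add_ne_top 3 h.1 4 h.2 rfl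
    · have hsub : F ⊆ {1, 2, 4, 7} := fun b hb => by
        have := hF.le_top b hb
        interval_cases b <;> first | decide | contradiction
      exact (sum_le_sum_of_subset hsub).trans (by decide)
    · have hsub : F ⊆ {1, 2, 3, 7} := fun b hb => by
        have := hF.le_top b hb
        interval_cases b <;> first | decide | contradiction
      exact (sum_le_sum_of_subset hsub).trans (by decide)
  · have h₇ : 7 ∉ F := fun h => hF.add_ne_top _ (hF.sub_mem 7 h (by norm_num)) 7 h rfl
    have h₈ : 8 ∉ F := fun h => hF.succ_notMem 8 h (by norm_num) hF.top_mem
    have hsub : F ⊆ {1, 2, 3, 4, 9} := fun b hb => by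
      have := hF.le_top b hb
      interval_cases b <;> first | decide | contradiction
    exact (sum_le_sum_of_subset hsub).trans (by decide)

end IsDSHookSet

namespace IntPartition

variable {lam : IntPartition} {t : ℕ}

theorem IsCore.sub_mem_firstColumnHooks {s b : ℕ} (hs : lam.IsCore s)
    (hb : b ∈ lam.firstColumnHooks) (hsb : s ≤ b) : b - s ∈ lam.firstColumnHooks := by
  obtain ⟨i, hi, rfl⟩ := lam.mem_firstColumnHooks.1 hb
  by_contra hmF
  obtain rfl | hs0 := Nat.eq_zero_or_pos s
  · exact hmF (by simpa using hb)
  obtain ⟨j, hj, hhook⟩ := lam.exists_hook_add_eq_hook_zero hi (by omega) hmF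
  exact hs i j hj ⟨1, by omega⟩

theorem InDS.isDSHookSet (h : lam.InDS t) (ha : 0 < lam.parts 0) :
    IsDSHookSet t (lam.parts 0) lam.firstColumnHooks := by
  obtain ⟨hsc, hcore, hcore', hdist⟩ := h
  set a := lam.parts 0
  have hn : lam.conjParts 0 = a := hsc 0
  have hhook : ∀ i < a, lam.hook i 0 + i + 1 = lam.parts i + a := fun i hi => by
    simpa [hn] using lam.hook_zero_add (hn ▸ hi)
  have hle : ∀ i, lam.parts i ≤ a := fun i => lam.antitone 0 i (Nat.zero_le i)
  have hmem : ∀ b, b ∈ lam.firstColumnHooks ↔ ∃ i < a, lam.hook i 0 = b := by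
    simp [mem_firstColumnHooks, hn]
  refine ⟨?_, (hmem _).2 ⟨0, ha, by have := hhook 0 ha; omega⟩, ?_,
    fun b hb => hcore.sub_mem_firstColumnHooks hb,
    fun b hb => hcore'.sub_mem_firstColumnHooks hb, ?_, ?_⟩ <;> simp only [hmem]
  · rintro ⟨i, hi, h0⟩
    exact (lam.hook_pos (lam.lt_conjParts_iff.1 (hn ▸ hi))).ne' h0
  · rintro _ ⟨i, hi, rfl⟩
    have := hhook i hi
    have := hle i
    omega
  · rintro _ ⟨k, hk, rfl⟩ _ ⟨j, hj, rfl⟩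
    have := hhook k hk
    have := hhook j hj
    have := lam.parts_add_conjParts_ne k j
    rw [hsc j] at this
    omega
  · rintro _ ⟨j, hj, rfl⟩ hab ⟨i, hi, hsucc⟩
    have := hhook i hi
    have := hhook j hj
    have hij : i < j := by
      by_contra! hji
      have := lam.antitone j i hji
      omega
    have := lam.antitone i j hij.le
    obtain rfl : j = i + 1 := by
      by_contra!
      have := lam.antitone (i + 1) j (by omega)
      omega
    refine hdist i (i + 1) ?_ ?_ (by omega) (by omega) <;> rw [lt_durfee_iff] <;> omega

theorem InDS.size_le_of_sum_le (h : lam.InDS t) {B : ℕ}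
    (hB : ∀ a F, IsDSHookSet t a F → B < a * a → ∑ b ∈ F, b ≤ ∑ i ∈ range a, i + B) :
    lam.size ≤ B := by
  have hn : lam.conjParts 0 = lam.parts 0 := h.1 0
  have hbox := lam.size_le_conjParts_zero_mul_parts_zero
  rw [hn] at hbox
  by_cases hsq : lam.parts 0 * lam.parts 0 ≤ B
  · exact hbox.trans hsq
  rw [not_le] at hsq
  have ha : 0 < lam.parts 0 := Nat.pos_of_ne_zero fun h0 => by simp [h0] at hsq
  have hsum := lam.size_add_sum_range_eq_sum_firstColumnHooks
  rw [hn] at hsum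
  have := hB _ _ (h.isDSHookSet ha) hsq
  omega

def hookPartition (n : ℕ) : IntPartition where
  parts i := if i = 0 then n else if i < n then 1 else 0
  antitone i j hij := by split_ifs <;> omega
  finite := ⟨n + 1, fun i hi => by split_ifs <;> omega⟩

theorem hookPartition_parts (n i : ℕ) :
    (hookPartition n).parts i = if i = 0 then n else if i < n then 1 else 0 := rfl

theorem hookPartition_isSelfConjugate (n : ℕ) : (hookPartition n).IsSelfConjugate :=
  isSelfConjugate_of_forall_lt_iff _ fun i j => by
    simp only [hookPartition_parts]
    split_ifs <;> omega

theorem hookPartition_isCore {n s : ℕ} (hn : n ≤ s) (h : 0 < n → ¬ s ∣ 2 * n - 1) :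
    (hookPartition n).IsCore s := by
  intro i j hij hdvd
  have hhook := (hookPartition n).hook_add hij
  have hpos := (hookPartition n).hook_pos hij
  rw [hookPartition_isSelfConjugate n j] at hhook
  unfold IsCell at hij
  simp only [hookPartition_parts] at hij hhook
  by_cases hij0 : i = 0 ∧ j = 0
  · obtain ⟨rfl, rfl⟩ := hij0
    simp only [if_true] at hij hhook
    exact h hij (by convert hdvd using 1; omega)
  · have : (hookPartition n).hook i j < s := by split_ifs at hij hhook <;> omega
    exact absurd (Nat.le_of_dvd hpos hdvd) (by omega)

theorem hookPartition_durfee_le_one (n : ℕ) : (hookPartition n).durfee ≤ 1 := by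
  by_contra! h
  have := (hookPartition n).lt_durfee_iff.1 h
  simp only [hookPartition_parts] at this
  split_ifs at this <;> omega

theorem size_hookPartition (n : ℕ) : (hookPartition n).size = 2 * n - 1 := by
  rw [size_eq_sum_range, hookPartition_isSelfConjugate n 0]
  cases n with
  | zero => rfl
  | succ n =>
    change ∑ i ∈ range (n + 1), _ = _
    rw [sum_range_succ', sum_congr rfl fun i hi => (by
      simp only [hookPartition_parts]
      split_ifs <;> simp_all : (hookPartition (n + 1)).parts (i + 1) = 1)]
    simp [hookPartition_parts]
    omega

theorem hookPartition_inDS {n : ℕ} (hn : n ≤ t)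
    (h : 0 < n → ¬ t ∣ 2 * n - 1 ∧ ¬ (t + 1) ∣ 2 * n - 1) : (hookPartition n).InDS t :=
  ⟨hookPartition_isSelfConjugate n, hookPartition_isCore hn fun hn => (h hn).1,
    hookPartition_isCore (by omega) fun hn => (h hn).2, fun i j hi hj hij => by
      have := hookPartition_durfee_le_one n
      omega⟩

end IntPartition

open IntPartition

/-- The largest size of a partition in `DS(t)`: `m(1) = 0`, `m(2) = 1`, and
`m(t) = 2t - 1` for `3 ≤ t ≤ 5`. -/
theorem largest_size_inDS_small :
    IsGreatest {n : ℕ | ∃ lam : IntPartition, lam.InDS 1 ∧ lam.size = n} 0 ∧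
    IsGreatest {n : ℕ | ∃ lam : IntPartition, lam.InDS 2 ∧ lam.size = n} 1 ∧
    ∀ t : ℕ, 3 ≤ t → t ≤ 5 →
      IsGreatest {n : ℕ | ∃ lam : IntPartition, lam.InDS t ∧ lam.size = n}
        (2 * t - 1) := by
  refine ⟨⟨⟨_, hookPartition_inDS (Nat.zero_le 1) (by simp), size_hookPartition 0⟩, ?_⟩,
    ⟨⟨_, hookPartition_inDS (by norm_num) (by decide), size_hookPartition 1⟩, ?_⟩,
    fun t ht₃ ht₅ => ⟨⟨_, hookPartition_inDS le_rfl ?_, size_hookPartition t⟩, ?_⟩⟩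
  · rintro _ ⟨lam, h, rfl⟩
    exact h.size_le_of_sum_le fun _ _ hF _ => absurd hF.one_lt (lt_irrefl 1)
  · rintro _ ⟨lam, h, rfl⟩
    exact h.size_le_of_sum_le fun _ _ hF ha => hF.sum_le_two ha
  · interval_cases t <;> decide
  · rintro _ ⟨lam, h, rfl⟩
    interval_cases t
    · exact h.size_le_of_sum_le fun _ _ hF ha => hF.sum_le_three ha
    · exact h.size_le_of_sum_le fun _ _ hF ha => hF.sum_le_four ha
    · exact h.size_le_of_sum_le fun _ _ hF ha => hF.sum_le_five ha
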